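/- arXiv:1211.5035 — 4 statements merged into one kernel-verified Lean document; each statement's English description precedes it below -/
import Mathlib

section
/- Let (Ω, F, P) be a probability space with filtration (F_k)_{k=0}^n, let (Δ_k)_{k=1}^n be square-integrable adapted random variables (Δ_k being F_k-measurable), and let H be a square-integrable random variable. A pair (V_0, (φ_k)_{k=1}^n) with V_0 ∈ ℝ and φ_k real-valued F_{k-1}-measurable such that each φ_k Δ_k is square integrable minimizes E[(H - V_0 - Σ_{k=1}^n φ_k Δ_k)²] over all such pairs if and only if E[G] = 0 and E[G Δ_k | F_{k-1}] = 0 a.s. for all k = 1,…,n, where G = H - V_0 - Σ_{k=1}^n φ_k Δ_k. -/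
/-!
The error of an admissible pair `(W₀, ψ)` is `G + D` with `D = (V₀ - W₀) + ∑ (φₖ - ψₖ) Δₖ`,
and these `D` run through the linear space of constants plus gains of admissible strategies.
Expanding the square, `(V₀, φ)` is optimal iff `E[G D] = 0` for all such `D`: one direction since
`E[(G + D)²] = E[G²] + E[D²]`, the other because `c ↦ 2c E[G D] + c² E[D²]` must stay nonnegative.
Testing `D = 1` gives `E[G] = 0`, testing `D = 1_O Δₖ` with `O ∈ F_{k-1}` gives
`E[G Δₖ | F_{k-1}] = 0`; conversely the `F_{k-1}`-measurable `θₖ` pulls out of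
`E[θₖ G Δₖ | F_{k-1}]`, so `E[G θₖ Δₖ] = 0`.
-/

open MeasureTheory Finset

section SquareIntegrable

variable {Ω : Type*} {m0 : MeasurableSpace Ω} {P : Measure Ω} {f g : Ω → ℝ}

lemma integral_add_sq (hf : MemLp f 2 P) (hg : MemLp g 2 P) :
    ∫ ω, (f ω + g ω) ^ 2 ∂P
      = ∫ ω, f ω ^ 2 ∂P + 2 * ∫ ω, f ω * g ω ∂P + ∫ ω, g ω ^ 2 ∂P := by
  have hfg : Integrable (fun ω => 2 * (f ω * g ω)) P := (hf.integrable_mul hg).const_mul 2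
  simp_rw [add_sq, mul_assoc]
  have hsum : Integrable (fun ω => f ω ^ 2 + 2 * (f ω * g ω)) P := hf.integrable_sq.add hfg
  rw [integral_add hsum hg.integrable_sq, integral_add hf.integrable_sq hfg, integral_const_mul]

lemma integral_mul_eq_zero_of_forall_integral_sq_le (hf : MemLp f 2 P) (hg : MemLp g 2 P)
    (h : ∀ c : ℝ, ∫ ω, f ω ^ 2 ∂P ≤ ∫ ω, (f ω + c * g ω) ^ 2 ∂P) :
    ∫ ω, f ω * g ω ∂P = 0 := by
  have hquad : ∀ c : ℝ,
      0 ≤ (∫ ω, g ω ^ 2 ∂P) * (c * c) + (2 * ∫ ω, f ω * g ω ∂P) * c + 0 := by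
    intro c
    have hc := h c
    simp_rw [integral_add_sq hf (hg.const_mul c), mul_pow, mul_left_comm (f _) c,
      integral_const_mul] at hc
    nlinarith
  have hdisc := discrim_le_zero hquad
  rw [discrim] at hdisc
  nlinarith

lemma integral_sq_le_integral_add_sq (hf : MemLp f 2 P) (hg : MemLp g 2 P)
    (h : ∫ ω, f ω * g ω ∂P = 0) :
    ∫ ω, f ω ^ 2 ∂P ≤ ∫ ω, (f ω + g ω) ^ 2 ∂P := by
  have hg_sq : 0 ≤ ∫ ω, g ω ^ 2 ∂P := integral_nonneg fun ω => sq_nonneg (g ω)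
  rw [integral_add_sq hf hg, h]
  linarith

end SquareIntegrable

section CondExp

variable {Ω : Type*} {m m0 : MeasurableSpace Ω} {P : Measure Ω} {X θ : Ω → ℝ}

lemma condExp_ae_eq_zero_of_forall_setIntegral_eq_zero (hm : m ≤ m0) [SigmaFinite (P.trim hm)]
    (hX : Integrable X P) (h : ∀ s, MeasurableSet[m] s → ∫ ω in s, X ω ∂P = 0) :
    P[X | m] =ᵐ[P] 0 :=
  (ae_eq_condExp_of_forall_setIntegral_eq hm hX (fun _ _ _ => integrableOn_zero)
    (fun s hs _ => by simp [h s hs]) aestronglyMeasurable_zero).symm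

lemma integral_mul_eq_zero_of_condExp_ae_eq_zero (hm : m ≤ m0) [SigmaFinite (P.trim hm)]
    (hθ : StronglyMeasurable[m] θ) (hθX : Integrable (θ * X) P) (hX : Integrable X P)
    (h : P[X | m] =ᵐ[P] 0) :
    ∫ ω, θ ω * X ω ∂P = 0 :=
  calc ∫ ω, θ ω * X ω ∂P = ∫ ω, P[θ * X | m] ω ∂P := (integral_condExp hm).symm
    _ = ∫ ω, θ ω * P[X | m] ω ∂P :=
      integral_congr_ae (condExp_mul_of_stronglyMeasurable_left hθ hθX hX)
    _ = ∫ _, 0 ∂P := integral_congr_ae (h.mono fun ω hω => by simp [hω])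
    _ = 0 := integral_zero Ω ℝ

end CondExp

namespace QuadraticHedging

variable {Ω : Type*} {m0 : MeasurableSpace Ω} {P : Measure Ω}
  {F : ℕ → MeasurableSpace Ω} {n : ℕ} {Δ θ η : ℕ → Ω → ℝ}

def gains (n : ℕ) (Δ θ : ℕ → Ω → ℝ) (ω : Ω) : ℝ :=
  ∑ k ∈ Icc 1 n, θ k ω * Δ k ω

def hedgingError (n : ℕ) (Δ : ℕ → Ω → ℝ) (H : Ω → ℝ) (V0 : ℝ) (θ : ℕ → Ω → ℝ) (ω : Ω) : ℝ :=
  H ω - V0 - gains n Δ θ ω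

def IsAdmissible (P : Measure Ω) (F : ℕ → MeasurableSpace Ω) (n : ℕ) (Δ θ : ℕ → Ω → ℝ) :
    Prop :=
  (∀ k ∈ Icc 1 n, Measurable[F (k - 1)] (θ k)) ∧
    ∀ k ∈ Icc 1 n, MemLp (fun ω => θ k ω * Δ k ω) 2 P

lemma gains_zero (ω : Ω) : gains n Δ 0 ω = 0 := by
  simp [gains]

lemma gains_sub (ω : Ω) : gains n Δ (θ - η) ω = gains n Δ θ ω - gains n Δ η ω := by
  simp only [gains, Pi.sub_apply, sub_mul, sum_sub_distrib]

lemma gains_smul (c : ℝ) (ω : Ω) : gains n Δ (c • θ) ω = c * gains n Δ θ ω := by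
  simp only [gains, Pi.smul_apply, smul_eq_mul, mul_assoc, mul_sum]

lemma gains_single {k : ℕ} (hk : k ∈ Icc 1 n) (g : Ω → ℝ) (ω : Ω) :
    gains n Δ (Pi.single k g) ω = g ω * Δ k ω := by
  rw [gains, sum_eq_single_of_mem k hk fun j _ hjk => by simp [hjk], Pi.single_eq_same]

lemma hedgingError_eq_add (H : Ω → ℝ) (V0 W0 : ℝ) (ω : Ω) :
    hedgingError n Δ H W0 η ω = hedgingError n Δ H V0 θ ω + (V0 - W0 + gains n Δ (θ - η) ω) := by
  simp only [hedgingError, gains_sub]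
  ring

namespace IsAdmissible

lemma zero : IsAdmissible P F n Δ 0 :=
  ⟨fun _ _ => measurable_const, fun _ _ => by simp⟩

lemma sub (hθ : IsAdmissible P F n Δ θ) (hη : IsAdmissible P F n Δ η) :
    IsAdmissible P F n Δ (θ - η) :=
  ⟨fun k hk => (hθ.1 k hk).sub (hη.1 k hk),
    fun k hk => by
      convert (hθ.2 k hk).sub (hη.2 k hk) using 1
      ext ω
      simp only [Pi.sub_apply, sub_mul]⟩

lemma smul (hθ : IsAdmissible P F n Δ θ) (c : ℝ) : IsAdmissible P F n Δ (c • θ) :=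
  ⟨fun k hk => (hθ.1 k hk).const_smul c,
    fun k hk => by simpa only [Pi.smul_apply, smul_eq_mul, mul_assoc] using (hθ.2 k hk).const_mul c⟩

lemma memLp_gains (hθ : IsAdmissible P F n Δ θ) : MemLp (gains n Δ θ) 2 P :=
  memLp_finsetSum _ hθ.2

end IsAdmissible

lemma isAdmissible_single_indicator (hF : ∀ k, F k ≤ m0) (hΔ : ∀ k, MemLp (Δ k) 2 P) {k : ℕ}
    {s : Set Ω} (hs : MeasurableSet[F (k - 1)] s) :
    IsAdmissible P F n Δ (Pi.single k (s.indicator 1)) := by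
  refine ⟨fun j _ => ?_, fun j _ => ?_⟩ <;> obtain rfl | hjk := eq_or_ne j k
  · rw [Pi.single_eq_same]
    exact measurable_const.indicator hs
  · rw [Pi.single_eq_of_ne hjk]
    exact measurable_const
  · convert (hΔ j).indicator (hF _ s hs) using 1
    ext ω
    by_cases hω : ω ∈ s <;> simp [hω]
  · simp [hjk]

variable [IsFiniteMeasure P]

lemma IsAdmissible.memLp_hedgingError {H : Ω → ℝ} (hθ : IsAdmissible P F n Δ θ)
    (hH : MemLp H 2 P) (V0 : ℝ) : MemLp (hedgingError n Δ H V0 θ) 2 P :=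
  (hH.sub (memLp_const V0)).sub hθ.memLp_gains

theorem forall_integral_hedgingError_sq_le_iff {H : Ω → ℝ} {V0 : ℝ} {φ : ℕ → Ω → ℝ}
    (hH : MemLp H 2 P) (hφ : IsAdmissible P F n Δ φ) :
    (∀ W0 ψ, IsAdmissible P F n Δ ψ →
        ∫ ω, hedgingError n Δ H V0 φ ω ^ 2 ∂P ≤ ∫ ω, hedgingError n Δ H W0 ψ ω ^ 2 ∂P) ↔
      ∀ (a : ℝ) θ, IsAdmissible P F n Δ θ →
        ∫ ω, hedgingError n Δ H V0 φ ω * (a + gains n Δ θ ω) ∂P = 0 := by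
  have hG := hφ.memLp_hedgingError hH V0
  constructor
  · intro hmin a θ hθ
    refine integral_mul_eq_zero_of_forall_integral_sq_le hG
      ((memLp_const a).add hθ.memLp_gains) fun c => ?_
    convert hmin (V0 - c * a) (φ - c • θ) (hφ.sub (hθ.smul c)) using 3 with ω
    rw [hedgingError_eq_add (θ := φ) H V0 (V0 - c * a) ω, sub_sub_cancel, sub_sub_cancel,
      gains_smul]
    ring
  · intro horth W0 ψ hψ
    have hD : MemLp (fun ω => V0 - W0 + gains n Δ (φ - ψ) ω) 2 P :=
      (memLp_const (V0 - W0)).add (hφ.sub hψ).memLp_gains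
    simpa only [← hedgingError_eq_add] using
      integral_sq_le_integral_add_sq hG hD (horth _ _ (hφ.sub hψ))

lemma integral_mul_gains_eq_zero (hF : ∀ k, F k ≤ m0) (hΔ : ∀ k, MemLp (Δ k) 2 P) {G : Ω → ℝ}
    (hG : MemLp G 2 P) (hθ : IsAdmissible P F n Δ θ)
    (hcond : ∀ k ∈ Icc 1 n, P[fun ω => G ω * Δ k ω | F (k - 1)] =ᵐ[P] 0) :
    ∫ ω, G ω * gains n Δ θ ω ∂P = 0 := by
  have hterm : ∀ k ∈ Icc 1 n, Integrable (fun ω => G ω * (θ k ω * Δ k ω)) P :=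
    fun k hk => hG.integrable_mul (hθ.2 k hk)
  simp_rw [gains, mul_sum]
  rw [integral_finsetSum _ hterm]
  refine sum_eq_zero fun k hk => ?_
  simp_rw [mul_left_comm (G _)]
  exact integral_mul_eq_zero_of_condExp_ae_eq_zero (hF _) (hθ.1 k hk).stronglyMeasurable
    ((hterm k hk).congr (ae_of_all _ fun ω => mul_left_comm (G ω) (θ k ω) (Δ k ω)))
    (hG.integrable_mul (hΔ k)) (hcond k hk)

theorem forall_integral_mul_add_gains_eq_zero_iff (hF : ∀ k, F k ≤ m0)
    (hΔ : ∀ k, MemLp (Δ k) 2 P) {G : Ω → ℝ} (hG : MemLp G 2 P) :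
    (∀ (a : ℝ) θ, IsAdmissible P F n Δ θ → ∫ ω, G ω * (a + gains n Δ θ ω) ∂P = 0) ↔
      (∫ ω, G ω ∂P = 0 ∧ ∀ k ∈ Icc 1 n, P[fun ω => G ω * Δ k ω | F (k - 1)] =ᵐ[P] 0) := by
  constructor
  · intro horth
    refine ⟨by simpa [gains_zero] using horth 1 0 IsAdmissible.zero, fun k hk => ?_⟩
    refine condExp_ae_eq_zero_of_forall_setIntegral_eq_zero (hF _) (hG.integrable_mul (hΔ k))
      fun s hs => ?_
    have hs_orth := horth 0 _ (isAdmissible_single_indicator hF hΔ hs)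
    simp_rw [gains_single hk, zero_add] at hs_orth
    rw [← integral_indicator (hF _ s hs), ← hs_orth]
    congr 1 with ω
    by_cases hω : ω ∈ s <;> simp [hω]
  · rintro ⟨hmean, hcond⟩ a θ hθ
    have hconst : Integrable (fun ω => G ω * a) P := (hG.integrable one_le_two).mul_const a
    have hgains : Integrable (fun ω => G ω * gains n Δ θ ω) P := hG.integrable_mul hθ.memLp_gains
    simp_rw [mul_add]
    rw [integral_add hconst hgains, integral_mul_const,
      hmean, integral_mul_gains_eq_zero hF hΔ hG hθ hcond]
    simp

end QuadraticHedging

open QuadraticHedging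

theorem quadratic_hedging_optimality_general {Ω : Type*} {m0 : MeasurableSpace Ω}
    (P : Measure Ω) [IsProbabilityMeasure P]
    (n : ℕ) (F : ℕ → MeasurableSpace Ω) (hFle : ∀ k, F k ≤ m0)
    (Δ : ℕ → Ω → ℝ)
    (hΔ2 : ∀ k, MemLp (Δ k) 2 P)
    (H : Ω → ℝ) (hH : MemLp H 2 P)
    (V0 : ℝ) (φ : ℕ → Ω → ℝ)
    (hφmeas : ∀ k ∈ Finset.Icc 1 n, Measurable[F (k - 1)] (φ k))
    (hφ2 : ∀ k ∈ Finset.Icc 1 n, MemLp (fun ω => φ k ω * Δ k ω) 2 P) :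
    (∀ (W0 : ℝ) (ψ : ℕ → Ω → ℝ),
        (∀ k ∈ Finset.Icc 1 n, Measurable[F (k - 1)] (ψ k)) →
        (∀ k ∈ Finset.Icc 1 n, MemLp (fun ω => ψ k ω * Δ k ω) 2 P) →
        (∫ ω, (H ω - V0 - ∑ k ∈ Finset.Icc 1 n, φ k ω * Δ k ω) ^ 2 ∂P) ≤
          ∫ ω, (H ω - W0 - ∑ k ∈ Finset.Icc 1 n, ψ k ω * Δ k ω) ^ 2 ∂P)
      ↔
    ((∫ ω, (H ω - V0 - ∑ k ∈ Finset.Icc 1 n, φ k ω * Δ k ω) ∂P) = 0 ∧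
      ∀ k ∈ Finset.Icc 1 n,
        P[fun ω => (H ω - V0 - ∑ j ∈ Finset.Icc 1 n, φ j ω * Δ j ω) * Δ k ω
          | F (k - 1)] =ᵐ[P] 0) := by
  have hφ : IsAdmissible P F n Δ φ := ⟨hφmeas, hφ2⟩
  calc _ ↔ ∀ W0 ψ, IsAdmissible P F n Δ ψ →
          ∫ ω, hedgingError n Δ H V0 φ ω ^ 2 ∂P ≤ ∫ ω, hedgingError n Δ H W0 ψ ω ^ 2 ∂P :=
        forall₂_congr fun _ _ => and_imp.symm
    _ ↔ _ := forall_integral_hedgingError_sq_le_iff hH hφ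
    _ ↔ _ := forall_integral_mul_add_gains_eq_zero_iff hFle hΔ2 (hφ.memLp_hedgingError hH V0)

/-- First-order optimality characterization for discrete-time quadratic hedging:
`(V₀, φ)` minimizes the expected squared hedging error over all admissible pairs
iff `E[G] = 0` and `E[G Δₖ | F_{k-1}] = 0` a.s. for all `k = 1,…,n`. -/
theorem quadratic_hedging_optimality {Ω : Type*} {m0 : MeasurableSpace Ω}
    (P : Measure Ω) [IsProbabilityMeasure P]
    (n : ℕ) (F : ℕ → MeasurableSpace Ω) (hFle : ∀ k, F k ≤ m0)
    (hFmono : Monotone F)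
    (Δ : ℕ → Ω → ℝ)
    (hΔmeas : ∀ k, Measurable[F k] (Δ k))
    (hΔ2 : ∀ k, MemLp (Δ k) 2 P)
    (H : Ω → ℝ) (hH : MemLp H 2 P)
    (V0 : ℝ) (φ : ℕ → Ω → ℝ)
    (hφmeas : ∀ k ∈ Finset.Icc 1 n, Measurable[F (k - 1)] (φ k))
    (hφ2 : ∀ k ∈ Finset.Icc 1 n, MemLp (fun ω => φ k ω * Δ k ω) 2 P) :
    (∀ (W0 : ℝ) (ψ : ℕ → Ω → ℝ),
        (∀ k ∈ Finset.Icc 1 n, Measurable[F (k - 1)] (ψ k)) →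
        (∀ k ∈ Finset.Icc 1 n, MemLp (fun ω => ψ k ω * Δ k ω) 2 P) →
        (∫ ω, (H ω - V0 - ∑ k ∈ Finset.Icc 1 n, φ k ω * Δ k ω) ^ 2 ∂P) ≤
          ∫ ω, (H ω - W0 - ∑ k ∈ Finset.Icc 1 n, ψ k ω * Δ k ω) ^ 2 ∂P)
      ↔
    ((∫ ω, (H ω - V0 - ∑ k ∈ Finset.Icc 1 n, φ k ω * Δ k ω) ∂P) = 0 ∧
      ∀ k ∈ Finset.Icc 1 n,
        P[fun ω => (H ω - V0 - ∑ j ∈ Finset.Icc 1 n, φ j ω * Δ j ω) * Δ k ω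
          | F (k - 1)] =ᵐ[P] 0) :=
  quadratic_hedging_optimality_general P n F hFle Δ hΔ2 H hH V0 φ hφmeas hφ2
end

section
/- Let Q be an l×l stochastic matrix (Q_{ij} ≥ 0, Σ_j Q_{ij} = 1), and for each j ∈ {1,…,l} let m(j) ∈ ℝ^d and B(j) a symmetric d×d matrix such that B(j) - m(j)m(j)ᵀ is positive definite. Suppose γ : {1,…,l} → (0,1]. Define for each i: D_i = Σ_j Q_{ij} γ(j), B̄_i = (1/D_i) Σ_j Q_{ij} γ(j) B(j), μ̄_i = (1/D_i) Σ_j Q_{ij} γ(j) m(j), and γ'(i) = D_i (1 - μ̄_iᵀ B̄_i⁻¹ μ̄_i). Then B̄_i is invertible and γ'(i) ∈ (0, 1] for every i. -/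
/-!
With the probability weights `π j = Q i j * γ j / D i`, the matrix `B̄ᵢ - μ̄ᵢ μ̄ᵢᵀ` is the
covariance of a mixture, so by the law of total covariance it is the average of the
within-regime covariances `B j - m j m jᵀ` (positive definite) plus the covariance of the means
(positive semidefinite). Hence `S = B̄ᵢ - μ̄ᵢ μ̄ᵢᵀ` and `B̄ᵢ = S + μ̄ᵢ μ̄ᵢᵀ` are positive definite.
For `v = B̄ᵢ⁻¹ μ̄ᵢ` and `t = μ̄ᵢ ⬝ᵥ v` one has `v ⬝ᵥ S v = t - t²`, which is positive unless
`v = 0`, so `0 ≤ t < 1`; together with `D i ∈ (0, 1]` this gives `γ' i = D i (1 - t) ∈ (0, 1]`.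
-/

open Matrix Finset

theorem sum_mul_mem_Ioc {ι : Type*} [Fintype ι] {q γ : ι → ℝ} (hq : ∀ j, 0 ≤ q j)
    (hq1 : ∑ j, q j = 1) (hγ : ∀ j, γ j ∈ Set.Ioc 0 1) : ∑ j, q j * γ j ∈ Set.Ioc 0 1 := by
  obtain ⟨j, -, hj⟩ := exists_ne_zero_of_sum_ne_zero (hq1.trans_ne one_ne_zero)
  constructor
  · exact sum_pos' (fun k _ => mul_nonneg (hq k) (hγ k).1.le)
      ⟨j, mem_univ j, mul_pos ((hq j).lt_of_ne' hj) (hγ j).1⟩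
  · exact hq1 ▸ sum_le_sum fun k _ => mul_le_of_le_one_right (hq k) (hγ k).2

namespace Matrix

variable {n ι : Type*} [Fintype ι]

theorem sum_smul_sub_vecMulVec_sum_smul (π : ι → ℝ) (hπ : ∑ j, π j = 1)
    (B : ι → Matrix n n ℝ) (m : ι → n → ℝ) :
    ∑ j, π j • B j - vecMulVec (∑ j, π j • m j) (∑ j, π j • m j) =
      ∑ j, π j • (B j - vecMulVec (m j) (m j)) +
        ∑ j, π j • vecMulVec (m j - ∑ k, π k • m k) (m j - ∑ k, π k • m k) := by
  set μ := ∑ k, π k • m k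
  have hμ : ∀ c, ∑ j, π j * m j c = μ c := fun c => by simp [μ, Finset.sum_apply]
  ext a b
  simp only [sub_apply, add_apply, Matrix.sum_apply, smul_apply, vecMulVec_apply,
    Pi.sub_apply, smul_eq_mul]
  have hcross : ∑ j, π j * ((m j a - μ a) * (m j b - μ b)) =
      ∑ j, π j * (m j a * m j b) - μ a * μ b := by
    calc _ = ∑ j, π j * (m j a * m j b) - (∑ j, π j * m j a) * μ b
          - μ a * ∑ j, π j * m j b + (∑ j, π j) * (μ a * μ b) := by
          simp only [Finset.sum_mul, Finset.mul_sum, ← Finset.sum_sub_distrib,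
            ← Finset.sum_add_distrib]
          exact Finset.sum_congr rfl fun j _ => by ring
      _ = _ := by rw [hμ, hμ, hπ]; ring
  rw [hcross]
  simp only [mul_sub, Finset.sum_sub_distrib]
  ring

variable [Fintype n]

theorem posDef_sum_smul_sub_vecMulVec_sum_smul {π : ι → ℝ} (hπ0 : ∀ j, 0 ≤ π j)
    (hπ : ∑ j, π j = 1) {B : ι → Matrix n n ℝ} {m : ι → n → ℝ}
    (hpd : ∀ j, (B j - vecMulVec (m j) (m j)).PosDef) :
    (∑ j, π j • B j - vecMulVec (∑ j, π j • m j) (∑ j, π j • m j)).PosDef := by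
  classical
  rw [sum_smul_sub_vecMulVec_sum_smul π hπ]
  obtain ⟨j, -, hj⟩ := exists_ne_zero_of_sum_ne_zero (hπ.trans_ne one_ne_zero)
  refine PosDef.add_posSemidef ?_ (posSemidef_sum _ fun k _ => ?_)
  · rw [← add_sum_erase _ _ (mem_univ j)]
    exact ((hpd j).smul ((hπ0 j).lt_of_ne' hj)).add_posSemidef
      (posSemidef_sum _ fun k _ => (hpd k).posSemidef.smul (hπ0 k))
  · simpa using (posSemidef_vecMulVec_self_star (m k - ∑ k, π k • m k)).smul (hπ0 k)

namespace PosDef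

theorem of_sub_vecMulVec_self {A : Matrix n n ℝ} {μ : n → ℝ}
    (h : (A - vecMulVec μ μ).PosDef) : A.PosDef := by
  simpa using h.add_posSemidef (posSemidef_vecMulVec_self_star μ)

theorem dotProduct_inv_mulVec_mem_Ico [DecidableEq n] {A : Matrix n n ℝ} {μ : n → ℝ}
    (h : (A - vecMulVec μ μ).PosDef) : μ ⬝ᵥ A⁻¹ *ᵥ μ ∈ Set.Ico 0 1 := by
  set v := A⁻¹ *ᵥ μ
  have hAv : A *ᵥ v = μ := by
    rw [mulVec_mulVec, mul_nonsing_inv _ (of_sub_vecMulVec_self h).det_pos.ne'.isUnit,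
      one_mulVec]
  have hquad : v ⬝ᵥ (A - vecMulVec μ μ) *ᵥ v = μ ⬝ᵥ v - (μ ⬝ᵥ v) ^ 2 := by
    simp [sub_mulVec, hAv, vecMulVec_mulVec, dotProduct_comm v μ, sq]
  rcases eq_or_ne v 0 with hv | hv
  · simp [hv]
  · have hpos := h.dotProduct_mulVec_pos hv
    rw [star_trivial, hquad] at hpos
    constructor <;> nlinarith

end PosDef

end Matrix

theorem regime_switching_step_general {d l : ℕ}
    (Q : Fin l → Fin l → ℝ) (hQ : ∀ i j, 0 ≤ Q i j) (hQ1 : ∀ i, ∑ j, Q i j = 1)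
    (m : Fin l → Fin d → ℝ) (B : Fin l → Matrix (Fin d) (Fin d) ℝ)
    (hpd : ∀ j, (B j - vecMulVec (m j) (m j)).PosDef)
    (γ : Fin l → ℝ) (hγ : ∀ j, 0 < γ j ∧ γ j ≤ 1)
    (D : Fin l → ℝ) (hD : ∀ i, D i = ∑ j, Q i j * γ j)
    (Bbar : Fin l → Matrix (Fin d) (Fin d) ℝ)
    (hBbar : ∀ i, Bbar i = (D i)⁻¹ • ∑ j, (Q i j * γ j) • B j)
    (mubar : Fin l → Fin d → ℝ)
    (hmubar : ∀ i, mubar i = (D i)⁻¹ • ∑ j, (Q i j * γ j) • m j)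
    (γ' : Fin l → ℝ)
    (hγ' : ∀ i, γ' i = D i * (1 - mubar i ⬝ᵥ (Bbar i)⁻¹ *ᵥ mubar i)) :
    ∀ i, IsUnit (Bbar i).det ∧ 0 < γ' i ∧ γ' i ≤ 1 := by
  intro i
  obtain ⟨hDpos, hDle⟩ : D i ∈ Set.Ioc 0 1 := hD i ▸ sum_mul_mem_Ioc (hQ i) (hQ1 i) hγ
  set π : Fin l → ℝ := fun j => (D i)⁻¹ * (Q i j * γ j)
  have hπ0 : ∀ j, 0 ≤ π j := fun j =>
    mul_nonneg (inv_nonneg.2 hDpos.le) (mul_nonneg (hQ i j) (hγ j).1.le)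
  have hπ1 : ∑ j, π j = 1 := by rw [← mul_sum, ← hD i, inv_mul_cancel₀ hDpos.ne']
  have hS : (Bbar i - vecMulVec (mubar i) (mubar i)).PosDef := by
    rw [hBbar i, hmubar i]
    simp only [smul_sum, smul_smul]
    exact posDef_sum_smul_sub_vecMulVec_sum_smul hπ0 hπ1 hpd
  obtain ⟨ht0, ht1⟩ := hS.dotProduct_inv_mulVec_mem_Ico
  refine ⟨hS.of_sub_vecMulVec_self.det_pos.ne'.isUnit, ?_, ?_⟩ <;> rw [hγ' i]
  · exact mul_pos hDpos (sub_pos.2 ht1)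
  · exact mul_le_one₀ hDle (sub_nonneg.2 ht1.le) (sub_le_self _ ht0)

/-- Inductive step of Proposition 3 (regime-switching recursion): if `Q` is a
stochastic matrix, each `B j - m j (m j)ᵀ` is positive definite, and
`γ : Fin l → (0,1]`, then the weighted second-moment matrix `B̄ i` is invertible
and `γ'(i) = D i (1 - μ̄ᵢᵀ B̄ᵢ⁻¹ μ̄ᵢ) ∈ (0,1]` for every `i`. -/
theorem regime_switching_step {d l : ℕ}
    (Q : Fin l → Fin l → ℝ) (hQ : ∀ i j, 0 ≤ Q i j) (hQ1 : ∀ i, ∑ j, Q i j = 1)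
    (m : Fin l → Fin d → ℝ) (B : Fin l → Matrix (Fin d) (Fin d) ℝ)
    (hBsym : ∀ j, (B j).IsSymm)
    (hpd : ∀ j, (B j - vecMulVec (m j) (m j)).PosDef)
    (γ : Fin l → ℝ) (hγ : ∀ j, 0 < γ j ∧ γ j ≤ 1)
    (D : Fin l → ℝ) (hD : ∀ i, D i = ∑ j, Q i j * γ j)
    (Bbar : Fin l → Matrix (Fin d) (Fin d) ℝ)
    (hBbar : ∀ i, Bbar i = (D i)⁻¹ • ∑ j, (Q i j * γ j) • B j)
    (mubar : Fin l → Fin d → ℝ)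
    (hmubar : ∀ i, mubar i = (D i)⁻¹ • ∑ j, (Q i j * γ j) • m j)
    (γ' : Fin l → ℝ)
    (hγ' : ∀ i, γ' i = D i * (1 - mubar i ⬝ᵥ (Bbar i)⁻¹ *ᵥ mubar i)) :
    ∀ i, IsUnit (Bbar i).det ∧ 0 < γ' i ∧ γ' i ≤ 1 :=
  regime_switching_step_general Q hQ hQ1 m B hpd γ hγ D hD Bbar hBbar mubar hmubar γ' hγ'
end

section
/- Let (F_k)_{k=0}^n be a filtration, H a square-integrable random variable, (Δ_k) adapted square-integrable, (φ_k), (ψ_k) predictable with φ_kΔ_k, ψ_kΔ_k square integrable, and θ_0 ∈ ℝ. Set G = H - V_0 - Σ_{k=1}^n φ_k Δ_k. If E[G] = 0 and E[G Δ_k | F_{k-1}] = 0 a.s. for all k, then E[(G - θ_0 - Σ_{k=1}^n ψ_k Δ_k)²] = E[G²] + E[(θ_0 + Σ_{k=1}^n ψ_k Δ_k)²]. -/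
open MeasureTheory Finset

/-! With `Y = θ₀ + Σ ψₖ Δₖ`, the identity is Pythagoras in `L²` once `E[G Y] = 0`. Since `ψₖ` is
`F_{k-1}`-measurable it pulls out of the conditional expectation, so
`E[G ψₖ Δₖ] = E[ψₖ E[G Δₖ | F_{k-1}]] = 0`, while `E[G θ₀] = θ₀ E[G] = 0`. -/

section

variable {Ω : Type*} {m m0 : MeasurableSpace Ω} {μ : Measure Ω}

theorem integral_mul_eq_zero_of_condExp_ae_eq_zero_s12 (hm : m ≤ m0) [SigmaFinite (μ.trim hm)]
    {ψ f : Ω → ℝ} (hψ : AEStronglyMeasurable[m] ψ μ) (hf : Integrable f μ)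
    (hψf : Integrable (ψ * f) μ) (hcond : μ[f | m] =ᵐ[μ] 0) :
    ∫ ω, ψ ω * f ω ∂μ = 0 := by
  have hpull : μ[ψ * f | m] =ᵐ[μ] 0 := by
    filter_upwards [condExp_mul_of_aestronglyMeasurable_left hψ hψf hf, hcond] with ω hpull hω
    simp [hpull, hω]
  calc ∫ ω, ψ ω * f ω ∂μ = ∫ ω, (μ[ψ * f | m]) ω ∂μ := (integral_condExp hm).symm
    _ = 0 := by simp [integral_congr_ae hpull]

theorem integral_sub_sq_eq_add_of_integral_mul_eq_zero {f g : Ω → ℝ}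
    (hf : MemLp f 2 μ) (hg : MemLp g 2 μ) (hfg : ∫ ω, f ω * g ω ∂μ = 0) :
    ∫ ω, (f ω - g ω) ^ 2 ∂μ = ∫ ω, f ω ^ 2 ∂μ + ∫ ω, g ω ^ 2 ∂μ := by
  have hexpand : (fun ω => (f ω - g ω) ^ 2) = fun ω => f ω ^ 2 - 2 * (f ω * g ω) + g ω ^ 2 := by
    funext ω; ring
  have hf2 : Integrable (fun ω => f ω ^ 2) μ := hf.integrable_sq
  have hfg2 : Integrable (fun ω => 2 * (f ω * g ω)) μ := (hf.integrable_mul hg).const_mul 2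
  rw [hexpand, integral_add (f := fun ω => f ω ^ 2 - 2 * (f ω * g ω)) (hf2.sub hfg2)
    hg.integrable_sq, integral_sub hf2 hfg2, integral_const_mul, hfg]
  ring

theorem integral_mul_const_add_sum_eq_zero {ι : Type*} (s : Finset ι) {G : Ω → ℝ}
    {X : ι → Ω → ℝ} (c : ℝ) (hG : Integrable G μ)
    (hGX : ∀ i ∈ s, Integrable (fun ω => G ω * X i ω) μ)
    (hGmean : ∫ ω, G ω ∂μ = 0) (hGX0 : ∀ i ∈ s, ∫ ω, G ω * X i ω ∂μ = 0) :
    ∫ ω, G ω * (c + ∑ i ∈ s, X i ω) ∂μ = 0 := by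
  have hexpand : (fun ω => G ω * (c + ∑ i ∈ s, X i ω)) =
      fun ω => c * G ω + ∑ i ∈ s, G ω * X i ω := by
    funext ω; rw [mul_add, mul_sum, mul_comm]
  rw [hexpand, integral_add (hG.const_mul c) (integrable_finsetSum s hGX),
    integral_const_mul, hGmean, integral_finsetSum s hGX, sum_eq_zero hGX0, mul_zero, add_zero]

end

theorem hedging_orthogonal_decomposition_general {Ω : Type*} {m0 : MeasurableSpace Ω}
    (P : Measure Ω) [IsProbabilityMeasure P]
    (n : ℕ) (F : ℕ → MeasurableSpace Ω) (hFle : ∀ k, F k ≤ m0)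
    (Δ : ℕ → Ω → ℝ)
    (hΔ2 : ∀ k, MemLp (Δ k) 2 P)
    (H : Ω → ℝ) (hH : MemLp H 2 P)
    (V0 θ0 : ℝ) (φ ψ : ℕ → Ω → ℝ)
    (hφ2 : ∀ k ∈ Finset.Icc 1 n, MemLp (fun ω => φ k ω * Δ k ω) 2 P)
    (hψmeas : ∀ k ∈ Finset.Icc 1 n, Measurable[F (k - 1)] (ψ k))
    (hψ2 : ∀ k ∈ Finset.Icc 1 n, MemLp (fun ω => ψ k ω * Δ k ω) 2 P)
    (G : Ω → ℝ)
    (hG : G = fun ω => H ω - V0 - ∑ k ∈ Finset.Icc 1 n, φ k ω * Δ k ω)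
    (hGmean : (∫ ω, G ω ∂P) = 0)
    (hGorth : ∀ k ∈ Finset.Icc 1 n,
      P[fun ω => G ω * Δ k ω | F (k - 1)] =ᵐ[P] 0) :
    (∫ ω, (G ω - θ0 - ∑ k ∈ Finset.Icc 1 n, ψ k ω * Δ k ω) ^ 2 ∂P) =
      (∫ ω, (G ω) ^ 2 ∂P) +
        ∫ ω, (θ0 + ∑ k ∈ Finset.Icc 1 n, ψ k ω * Δ k ω) ^ 2 ∂P := by
  have hG2 : MemLp G 2 P :=
    hG ▸ (hH.sub (memLp_const V0)).sub (memLp_finsetSum _ hφ2)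
  have hcross : ∀ k ∈ Icc 1 n, ∫ ω, G ω * (ψ k ω * Δ k ω) ∂P = 0 := by
    intro k hk
    have hreorder : (fun ω => G ω * (ψ k ω * Δ k ω)) = ψ k * fun ω => G ω * Δ k ω := by
      funext ω; simp only [Pi.mul_apply]; ring
    rw [hreorder]
    exact integral_mul_eq_zero_of_condExp_ae_eq_zero_s12 (hFle (k - 1))
      (hψmeas k hk).aestronglyMeasurable (hG2.integrable_mul (hΔ2 k))
      (hreorder ▸ hG2.integrable_mul (hψ2 k hk)) (hGorth k hk)
  simp_rw [sub_sub]
  exact integral_sub_sq_eq_add_of_integral_mul_eq_zero hG2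
    ((memLp_const θ0).add (memLp_finsetSum _ hψ2))
    (integral_mul_const_add_sum_eq_zero _ θ0 (hG2.integrable one_le_two)
      (fun k hk => hG2.integrable_mul (hψ2 k hk)) hGmean hcross)

/-- Orthogonal decomposition for the quadratic hedging problem: if the hedging
error `G` satisfies `E[G] = 0` and `E[G Δₖ | F_{k-1}] = 0` a.s., then for any
perturbation `(θ₀, ψ)`,
`E[(G - θ₀ - Σ ψₖΔₖ)²] = E[G²] + E[(θ₀ + Σ ψₖΔₖ)²]`. -/
theorem hedging_orthogonal_decomposition {Ω : Type*} {m0 : MeasurableSpace Ω}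
    (P : Measure Ω) [IsProbabilityMeasure P]
    (n : ℕ) (F : ℕ → MeasurableSpace Ω) (hFle : ∀ k, F k ≤ m0)
    (hFmono : Monotone F)
    (Δ : ℕ → Ω → ℝ)
    (hΔmeas : ∀ k, Measurable[F k] (Δ k))
    (hΔ2 : ∀ k, MemLp (Δ k) 2 P)
    (H : Ω → ℝ) (hH : MemLp H 2 P)
    (V0 θ0 : ℝ) (φ ψ : ℕ → Ω → ℝ)
    (hφmeas : ∀ k ∈ Finset.Icc 1 n, Measurable[F (k - 1)] (φ k))
    (hφ2 : ∀ k ∈ Finset.Icc 1 n, MemLp (fun ω => φ k ω * Δ k ω) 2 P)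
    (hψmeas : ∀ k ∈ Finset.Icc 1 n, Measurable[F (k - 1)] (ψ k))
    (hψ2 : ∀ k ∈ Finset.Icc 1 n, MemLp (fun ω => ψ k ω * Δ k ω) 2 P)
    (G : Ω → ℝ)
    (hG : G = fun ω => H ω - V0 - ∑ k ∈ Finset.Icc 1 n, φ k ω * Δ k ω)
    (hGint : ∀ k ∈ Finset.Icc 1 n,
      Integrable (fun ω => G ω * ψ k ω * Δ k ω) P)
    (hGmean : (∫ ω, G ω ∂P) = 0)
    (hGorth : ∀ k ∈ Finset.Icc 1 n,
      P[fun ω => G ω * Δ k ω | F (k - 1)] =ᵐ[P] 0) :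
    (∫ ω, (G ω - θ0 - ∑ k ∈ Finset.Icc 1 n, ψ k ω * Δ k ω) ^ 2 ∂P) =
      (∫ ω, (G ω) ^ 2 ∂P) +
        ∫ ω, (θ0 + ∑ k ∈ Finset.Icc 1 n, ψ k ω * Δ k ω) ^ 2 ∂P :=
  hedging_orthogonal_decomposition_general P n F hFle Δ hΔ2 H hH V0 θ0 φ ψ hφ2 hψmeas hψ2 G hG
    hGmean hGorth
end

section
/- Given a stochastic matrix Q on {1,…,l}, scalars m(j) ∈ ℝ and B(j) > 0 with B(j) - m(j)² > 0 for each j, define γ_{n+1}(i) = 1 for all i and recursively ρ_{k+1}(i) = (Σ_j Q_{ij} γ_{k+1}(j) m(j)) / (Σ_j Q_{ij} γ_{k+1}(j) B(j)) and γ_k(i) = Σ_j Q_{ij} γ_{k+1}(j)(1 - ρ_{k+1}(i) m(j)). Then for all k = 1, …, n+1 and all i, γ_k(i) ∈ (0, 1]. -/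
open Finset

lemma regime_step {l : ℕ} (q g m B : Fin l → ℝ)
    (hq : ∀ j, 0 ≤ q j) (hq1 : ∑ j, q j = 1)
    (hg : ∀ j, 0 < g j ∧ g j ≤ 1)
    (hBpos : ∀ j, 0 < B j) (hvar : ∀ j, 0 < B j - (m j) ^ 2) :
    0 < ∑ j, q j * g j * (1 - (∑ j, q j * g j * m j) / (∑ j, q j * g j * B j) * m j) ∧
    ∑ j, q j * g j * (1 - (∑ j, q j * g j * m j) / (∑ j, q j * g j * B j) * m j) ≤ 1 := by
  set w : Fin l → ℝ := fun j => q j * g j with hw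
  have hwnn : ∀ j, 0 ≤ w j := fun j => mul_nonneg (hq j) (hg j).1.le
  -- some j₀ with q j₀ > 0
  obtain ⟨j₀, hj₀⟩ : ∃ j, 0 < q j := by
    by_contra h
    push_neg at h
    have : (∑ j, q j) ≤ 0 := Finset.sum_nonpos (fun j _ => h j)
    linarith [hq1]
  have hwj₀ : 0 < w j₀ := mul_pos hj₀ (hg j₀).1
  set D := ∑ j, w j with hD
  set S1 := ∑ j, w j * m j with hS1
  set S2 := ∑ j, w j * B j with hS2
  have hDpos : 0 < D :=
    Finset.sum_pos' (fun j _ => hwnn j) ⟨j₀, Finset.mem_univ _, hwj₀⟩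
  have hDle : D ≤ 1 := by
    rw [hD, ← hq1]
    exact Finset.sum_le_sum (fun j _ => mul_le_of_le_one_right (hq j) (hg j).2)
  have hS2pos : 0 < S2 :=
    Finset.sum_pos' (fun j _ => mul_nonneg (hwnn j) (hBpos j).le)
      ⟨j₀, Finset.mem_univ _, mul_pos hwj₀ (hBpos j₀)⟩
  have hSm2 : (∑ j, w j * (m j) ^ 2) < S2 := by
    rw [hS2]
    have : 0 < ∑ j, w j * (B j - (m j) ^ 2) :=
      Finset.sum_pos' (fun j _ => mul_nonneg (hwnn j) (hvar j).le)
        ⟨j₀, Finset.mem_univ _, mul_pos hwj₀ (hvar j₀)⟩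
    have hsplit : ∑ j, w j * (B j - (m j) ^ 2)
        = (∑ j, w j * B j) - ∑ j, w j * (m j) ^ 2 := by
      rw [← Finset.sum_sub_distrib]; congr 1; funext j; ring
    linarith [hsplit ▸ this]
  have hCS : S1 ^ 2 ≤ D * ∑ j, w j * (m j) ^ 2 := by
    have := Finset.sum_mul_sq_le_sq_mul_sq Finset.univ
      (fun j => Real.sqrt (w j)) (fun j => Real.sqrt (w j) * m j)
    have e1 : ∀ j, Real.sqrt (w j) * (Real.sqrt (w j) * m j) = w j * m j := by
      intro j
      rw [← mul_assoc, Real.mul_self_sqrt (hwnn j)]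
    have e2 : ∀ j, (Real.sqrt (w j)) ^ 2 = w j := fun j => Real.sq_sqrt (hwnn j)
    have e3 : ∀ j, (Real.sqrt (w j) * m j) ^ 2 = w j * (m j) ^ 2 := by
      intro j; rw [mul_pow, e2]
    simp only [e1, e2, e3] at this
    exact this
  have hS1sq : S1 ^ 2 < D * S2 := by
    calc S1 ^ 2 ≤ D * ∑ j, w j * (m j) ^ 2 := hCS
    _ < D * S2 := by exact (mul_lt_mul_iff_right₀ hDpos).2 hSm2
  have hexp : ∑ j, w j * (1 - S1 / S2 * m j) = D - S1 / S2 * S1 := by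
    rw [hD, hS1, Finset.mul_sum, ← Finset.sum_sub_distrib]
    congr 1; funext j; ring
  have hkey : ∑ j, q j * g j * (1 - S1 / S2 * m j) = D - S1 ^ 2 / S2 := by
    calc ∑ j, q j * g j * (1 - S1 / S2 * m j)
        = ∑ j, w j * (1 - S1 / S2 * m j) := rfl
    _ = D - S1 / S2 * S1 := hexp
    _ = D - S1 ^ 2 / S2 := by ring
  constructor
  · rw [hkey]
    have : S1 ^ 2 / S2 < D := (div_lt_iff₀ hS2pos).2 (by linarith [hS1sq])
    linarith
  · rw [hkey]
    have : 0 ≤ S1 ^ 2 / S2 := div_nonneg (sq_nonneg _) hS2pos.le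
    linarith

/-- One-dimensional regime-switching recursion (Proposition 3, d = 1): with `Q`
stochastic, `B j > 0`, `B j - m j ² > 0`, `γ (n+1) ≡ 1` and the backward
recursion via `ρ`, one gets `γ k i ∈ (0,1]` for all `k = 1,…,n+1` and all `i`. -/
theorem regime_switching_gamma_in_unit {l : ℕ}
    (Q : Fin l → Fin l → ℝ) (hQ : ∀ i j, 0 ≤ Q i j) (hQ1 : ∀ i, ∑ j, Q i j = 1)
    (m B : Fin l → ℝ) (hBpos : ∀ j, 0 < B j) (hvar : ∀ j, 0 < B j - (m j) ^ 2)
    (n : ℕ) (γ : ℕ → Fin l → ℝ) (ρ : ℕ → Fin l → ℝ)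
    (htop : ∀ i, γ (n + 1) i = 1)
    (hρ : ∀ k i, ρ (k + 1) i =
      (∑ j, Q i j * γ (k + 1) j * m j) / (∑ j, Q i j * γ (k + 1) j * B j))
    (hrec : ∀ k, 1 ≤ k → k ≤ n → ∀ i,
      γ k i = ∑ j, Q i j * γ (k + 1) j * (1 - ρ (k + 1) i * m j)) :
    ∀ k, 1 ≤ k → k ≤ n + 1 → ∀ i, 0 < γ k i ∧ γ k i ≤ 1 := by
  have key : ∀ d k, k + d = n + 1 → 1 ≤ k → ∀ i, 0 < γ k i ∧ γ k i ≤ 1 := by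
    intro d
    induction d with
    | zero =>
      intro k hk _ i
      simp only [Nat.add_zero] at hk
      subst hk
      rw [htop i]
      exact ⟨one_pos, le_refl 1⟩
    | succ d ih =>
      intro k hk hk1 i
      have hkn : k ≤ n := by omega
      have ih' : ∀ j, 0 < γ (k + 1) j ∧ γ (k + 1) j ≤ 1 :=
        ih (k + 1) (by omega) (by omega)
      have := regime_step (Q i) (γ (k + 1)) m B (hQ i) (hQ1 i) ih' hBpos hvar
      rw [hrec k hk1 hkn i, hρ k i]
      exact this
  intro k hk1 hk2
  exact key (n + 1 - k) k (by omega) hk1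
end
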